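/- arXiv:1906.00752 — 2 statements merged into one kernel-verified Lean document; each statement's English description precedes it below -/
import Mathlib

section
/- For the uniform binary case with n = 2\nu even, the probability generating function of S equals 2^{-2\nu} \prod_{k=1}^{\nu} (x^{2k-1} + 2 + x^{1-2k}). -/
open Finset

/-- Kendall score S = S⁺ - S⁻ of a finite sequence: S⁺ counts the pairs of positions in which
the earlier element exceeds the later one, S⁻ those in which the earlier element is smaller
(the paper's convention: S(0 1 1 2 0 2 1) = 5 - 11 = -6). -/
def kendallS {n : ℕ} {α : Type*} [LinearOrder α] (x : Fin n → α) : ℤ :=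
  ((Finset.univ.filter (fun p : Fin n × Fin n => p.2 < p.1 ∧ x p.1 < x p.2)).card : ℤ) -
  ((Finset.univ.filter (fun p : Fin n × Fin n => p.2 < p.1 ∧ x p.2 < x p.1)).card : ℤ)

/-! Prepending a letter `a` to a binary word `w` of length `n` with `k` ones changes its score
by `-k` if `a = 0` and by `n - k` if `a = 1`. Hence, by induction on the length, the joint
generating function of the score and the number of ones is `∏_{i<n} (1 + z x^{n-1-2i})`.
At `z = 1` and `n = 2ν` the exponents are the odd integers `±(2k-1)`, `1 ≤ k ≤ ν`, and
`(1 + x^m)(1 + x^{-m}) = x^m + 2 + x^{-m}`. -/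

section KendallScore

variable {K : Type*} [Field K] {n : ℕ}

theorem kendallS_eq_sum {α : Type*} [LinearOrder α] (x : Fin n → α) :
    kendallS x = ∑ p : Fin n × Fin n,
      ((if p.2 < p.1 ∧ x p.1 < x p.2 then 1 else 0) -
        (if p.2 < p.1 ∧ x p.2 < x p.1 then 1 else 0)) := by
  rw [Finset.sum_sub_distrib]
  simp only [kendallS, Finset.card_filter, Nat.cast_sum, apply_ite (Nat.cast : ℕ → ℤ),
    Nat.cast_one, Nat.cast_zero]

theorem kendallS_cons {α : Type*} [LinearOrder α] (a : α) (w : Fin n → α) :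
    kendallS (Fin.cons a w : Fin (n + 1) → α) = kendallS w +
      ∑ i, ((if w i < a then 1 else 0) - (if a < w i then 1 else 0)) := by
  rw [kendallS_eq_sum, kendallS_eq_sum w, Fintype.sum_prod_type, Fintype.sum_prod_type]
  simp only [Fin.sum_univ_succ, Fin.cons_zero, Fin.cons_succ, Fin.not_lt_zero, false_and,
    if_false, Fin.succ_pos, true_and, Fin.succ_lt_succ_iff,
    Finset.sum_sub_distrib, Finset.sum_add_distrib]
  ring

def numOnes (w : Fin n → Fin 2) : ℕ := ∑ i, (w i : ℕ)

theorem numOnes_cons (a : Fin 2) (w : Fin n → Fin 2) :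
    numOnes (Fin.cons a w : Fin (n + 1) → Fin 2) = a + numOnes w := by
  simp only [numOnes, Fin.sum_univ_succ, Fin.cons_zero, Fin.cons_succ]

theorem kendallS_cons_zero (w : Fin n → Fin 2) :
    kendallS (Fin.cons 0 w : Fin (n + 1) → Fin 2) = kendallS w - numOnes w := by
  have term (v : Fin 2) :
      ((if v < 0 then 1 else 0) - if 0 < v then 1 else 0) = -((v : ℕ) : ℤ) := by
    fin_cases v <;> rfl
  simp only [kendallS_cons, term, sum_neg_distrib, numOnes, Nat.cast_sum, sub_eq_add_neg]

theorem kendallS_cons_one (w : Fin n → Fin 2) :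
    kendallS (Fin.cons 1 w : Fin (n + 1) → Fin 2) = kendallS w + (n - numOnes w) := by
  have term (v : Fin 2) :
      ((if v < 1 then 1 else 0) - if 1 < v then 1 else 0) = 1 - ((v : ℕ) : ℤ) := by
    fin_cases v <;> rfl
  simp only [kendallS_cons, term, sum_sub_distrib, sum_const, card_univ, Fintype.card_fin,
    nsmul_eq_mul, mul_one, numOnes, Nat.cast_sum]

theorem sum_zpow_kendallS_mul_pow_numOnes {x : K} (hx : x ≠ 0) (n : ℕ) (z : K) :
    ∑ w : Fin n → Fin 2, x ^ kendallS w * z ^ numOnes w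
      = ∏ i ∈ range n, (1 + z * x ^ ((n : ℤ) - 1 - 2 * i)) := by
  induction n generalizing z with
  | zero => simp [kendallS, numOnes]
  | succ n ih =>
    have cons_zero (w : Fin n → Fin 2) :
        x ^ kendallS (Fin.cons 0 w : Fin (n + 1) → Fin 2) * z ^ numOnes (Fin.cons 0 w)
          = x ^ kendallS w * (z / x) ^ numOnes w := by
      rw [kendallS_cons_zero, numOnes_cons, zpow_sub₀ hx, zpow_natCast, div_pow]
      simp only [Fin.val_zero, zero_add]
      ring
    have cons_one (w : Fin n → Fin 2) :
        x ^ kendallS (Fin.cons 1 w : Fin (n + 1) → Fin 2) * z ^ numOnes (Fin.cons 1 w)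
          = z * x ^ (n : ℤ) * (x ^ kendallS w * (z / x) ^ numOnes w) := by
      rw [kendallS_cons_one, numOnes_cons, zpow_add₀ hx, zpow_sub₀ hx, zpow_natCast,
        zpow_natCast, div_pow, Fin.val_one, pow_add, pow_one]
      field_simp
    have shift (i : ℕ) : 1 + z * x ^ ((↑(n + 1) : ℤ) - 1 - 2 * ↑(i + 1))
        = 1 + z / x * x ^ ((n : ℤ) - 1 - 2 * i) := by
      rw [div_mul_eq_mul_div, mul_div_assoc, div_eq_mul_inv, ← zpow_sub_one₀ hx]
      push_cast
      ring_nf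
    rw [← (Fin.consEquiv fun _ => Fin 2).sum_comp, Fintype.sum_prod_type, Fin.sum_univ_two]
    simp only [Fin.consEquiv, Equiv.coe_fn_mk, cons_zero, cons_one, ← mul_sum, ih,
      prod_range_succ', shift]
    push_cast
    ring_nf

theorem sum_zpow_kendallS {x : K} (hx : x ≠ 0) (n : ℕ) :
    ∑ w : Fin n → Fin 2, x ^ kendallS w
      = ∏ i ∈ range n, (1 + x ^ ((n : ℤ) - 1 - 2 * i)) := by
  simpa using sum_zpow_kendallS_mul_pow_numOnes hx n 1


theorem one_add_zpow_mul_one_add_zpow_neg {x : K} (hx : x ≠ 0) (m : ℤ) :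
    (1 + x ^ m) * (1 + x ^ (-m)) = x ^ m + 2 + x ^ (-m) := by
  have : x ^ m * x ^ (-m) = 1 := by rw [← zpow_add₀ hx, add_neg_cancel, zpow_zero]
  linear_combination this

theorem prod_range_one_add_zpow_odd {x : K} (hx : x ≠ 0) (ν : ℕ) :
    ∏ i ∈ range (2 * ν), (1 + x ^ (2 * (ν : ℤ) - 1 - 2 * i))
      = ∏ k ∈ Icc 1 ν, (x ^ (2 * (k : ℤ) - 1) + 2 + x ^ (1 - 2 * (k : ℤ))) := by
  induction ν with
  | zero => simp
  | succ ν ih =>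
    have shift (i : ℕ) : 1 + x ^ (2 * ((ν + 1 : ℕ) : ℤ) - 1 - 2 * ((i + 1 : ℕ) : ℤ))
        = 1 + x ^ (2 * (ν : ℤ) - 1 - 2 * i) := by
      push_cast
      ring_nf
    have outer : (1 + x ^ (2 * ((ν + 1 : ℕ) : ℤ) - 1 - 2 * ((0 : ℕ) : ℤ)))
        * (1 + x ^ (2 * ((ν + 1 : ℕ) : ℤ) - 1 - 2 * ((2 * ν + 1 : ℕ) : ℤ)))
        = x ^ (2 * ((ν + 1 : ℕ) : ℤ) - 1) + 2 + x ^ (1 - 2 * ((ν + 1 : ℕ) : ℤ)) := by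
      rw [show (1 : ℤ) - 2 * ((ν + 1 : ℕ) : ℤ) = -(2 * ((ν + 1 : ℕ) : ℤ) - 1) by ring,
        ← one_add_zpow_mul_one_add_zpow_neg hx]
      push_cast
      ring_nf
    rw [show 2 * (ν + 1) = 2 * ν + 1 + 1 by ring, prod_range_succ, prod_range_succ',
      prod_Icc_succ_top (by omega), ← ih, mul_assoc, outer]
    simp only [shift]

end KendallScore

/-- PGF of S for n = 2ν fair coin flips: f(x) = 2^{-2ν} ∏ₖ (x^{2k-1} + 2 + x^{1-2k}). -/
theorem kendall_pgf_even (ν : ℕ) (x : ℝ) (hx : x ≠ 0) :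
    ∑ j : Fin (2 * ν) → Fin 2, (1 / 2 ^ (2 * ν) : ℝ) * x ^ kendallS j
      = (2 : ℝ) ^ (-(2 * ν : ℤ))
        * ∏ k ∈ Finset.Icc 1 ν,
            (x ^ (2 * (k : ℤ) - 1) + 2 + x ^ (1 - 2 * (k : ℤ))) := by
  rw [← mul_sum, sum_zpow_kendallS hx, ← prod_range_one_add_zpow_odd hx, zpow_neg, one_div]
  norm_cast
end

section
/- For biased binary sequences (P(x_k = 0) = p, P(x_k = 1) = q = 1-p, independent) with n = 2\nu+1 odd, the probability generating function of S equals \prod_{k=1}^{\nu} (pq x^{-2k} + p^2 + q^2 + pq x^{2k}). -/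
open Finset

/-! On binary sequences each pair `j < i` contributes `x j - x i` to `S`, so
`S x = ∑ i, x i * (n - 1 - 2 i)` is linear in `x`. Hence `y ^ S` factors over the
independent coordinates and the generating function is `∏ i, (p + q y ^ (n - 1 - 2 i))`.
For `n = 2ν + 1` the exponents are `2ν, 2ν - 2, …, -2ν`; the central factor is `p + q = 1`
and the factors with exponents `±2k` multiply to `pq y^{-2k} + p² + q² + pq y^{2k}`. -/

lemma zpow_sum₀ {ι G₀ : Type*} [CommGroupWithZero G₀] {y : G₀} (hy : y ≠ 0) (s : Finset ι)
    (f : ι → ℤ) : y ^ (∑ i ∈ s, f i) = ∏ i ∈ s, y ^ f i := by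
  classical
  induction s using Finset.induction_on with
  | empty => simp
  | insert a s ha ih => rw [sum_insert ha, prod_insert ha, zpow_add₀ hy, ih]

lemma sum_filter_lt_sub {R : Type*} [CommRing R] {n : ℕ} (f : Fin n → R) :
    ∑ p ∈ univ.filter (fun p : Fin n × Fin n => p.2 < p.1), (f p.2 - f p.1)
      = ∑ i, f i * ((n : R) - 1 - 2 * (i : R)) := by
  have earlier : ∑ p ∈ univ.filter (fun p : Fin n × Fin n => p.2 < p.1), f p.2
      = ∑ j, f j * ((n : R) - 1 - (j : R)) := by
    rw [sum_filter, Fintype.sum_prod_type_right]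
    refine sum_congr rfl fun j _ => ?_
    dsimp only
    rw [← sum_filter, sum_const, nsmul_eq_mul, mul_comm]
    congr 1
    have hj := j.isLt
    rw [show univ.filter (fun i : Fin n => j < i) = Ioi j by ext; simp, Fin.card_Ioi,
      Nat.cast_sub (by omega), Nat.cast_sub (by omega)]
    simp
  have later : ∑ p ∈ univ.filter (fun p : Fin n × Fin n => p.2 < p.1), f p.1
      = ∑ i, f i * (i : R) := by
    rw [sum_filter, Fintype.sum_prod_type]
    refine sum_congr rfl fun i _ => ?_
    dsimp only
    rw [← sum_filter, sum_const, nsmul_eq_mul, mul_comm,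
      show univ.filter (fun j : Fin n => j < i) = Iio i by ext; simp, Fin.card_Iio]
  rw [sum_sub_distrib, earlier, later, ← sum_sub_distrib]
  exact sum_congr rfl fun i _ => by ring

lemma Fin.two_ite_lt_sub_ite_lt (a b : Fin 2) :
    ((if a < b then 1 else 0) - (if b < a then 1 else 0) : ℤ) = b - a := by
  fin_cases a <;> fin_cases b <;> rfl

lemma kendallS_eq_sum_sub {n : ℕ} (x : Fin n → Fin 2) :
    kendallS x =
      ∑ p ∈ univ.filter (fun p : Fin n × Fin n => p.2 < p.1), ((x p.2 : ℤ) - x p.1) := by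
  simp only [kendallS, ← filter_filter, card_filter, Nat.cast_sum, Nat.cast_ite, Nat.cast_one,
    Nat.cast_zero, ← sum_sub_distrib, Fin.two_ite_lt_sub_ite_lt]

lemma kendallS_fin_two {n : ℕ} (x : Fin n → Fin 2) :
    kendallS x = ∑ i, (x i : ℤ) * ((n : ℤ) - 1 - 2 * (i : ℤ)) := by
  rw [kendallS_eq_sum_sub]
  exact sum_filter_lt_sub fun i => (x i : ℤ)

lemma sum_prod_mul_zpow_kendallS {K : Type*} [Field K] {n : ℕ} (p q : K) {y : K} (hy : y ≠ 0) :
    ∑ x : Fin n → Fin 2, (∏ k, if x k = 0 then p else q) * y ^ kendallS x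
      = ∏ i : Fin n, (p + q * y ^ ((n : ℤ) - 1 - 2 * (i : ℤ))) := by
  set c : Fin n → ℤ := fun i => (n : ℤ) - 1 - 2 * (i : ℤ)
  set w : Fin 2 → K := fun b => if b = 0 then p else q
  calc ∑ x : Fin n → Fin 2, (∏ k, w (x k)) * y ^ kendallS x
      = ∑ x : Fin n → Fin 2, ∏ k, w (x k) * y ^ ((x k : ℤ) * c k) := by
        refine sum_congr rfl fun x _ => ?_
        rw [kendallS_fin_two, zpow_sum₀ hy, prod_mul_distrib]
    _ = ∏ k, ∑ b : Fin 2, w b * y ^ ((b : ℤ) * c k) :=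
        (Fintype.prod_sum fun k (b : Fin 2) => w b * y ^ ((b : ℤ) * c k)).symm
    _ = ∏ k, (p + q * y ^ c k) := by simp [w, Fin.sum_univ_two]

lemma prod_range_sub_eq_mul_prod_Icc {M : Type*} [CommMonoid M] (f : ℤ → M) (ν : ℕ) :
    ∏ i ∈ range (2 * ν + 1), f (ν - i) = f 0 * ∏ k ∈ Icc 1 ν, f (-k) * f k := by
  induction ν with
  | zero => simp
  | succ ν ih =>
    rw [show 2 * (ν + 1) + 1 = 2 * ν + 1 + 1 + 1 by omega, prod_range_succ, prod_range_succ',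
      prod_Icc_succ_top (by omega)]
    push_cast
    simp only [show ∀ i : ℕ, (ν : ℤ) + 1 - (i + 1 : ℤ) = ν - i from fun i => by ring, ih]
    rw [show (ν : ℤ) + 1 - (2 * ν + 2 : ℤ) = -(ν + 1) by ring, sub_zero]
    ac_rfl

lemma mul_add_zpow_neg_mul_add_zpow {K : Type*} [Field K] (p q : K) {y : K} (hy : y ≠ 0)
    (m : ℤ) :
    (p + q * y ^ (-m)) * (p + q * y ^ m) = p * q * y ^ (-m) + p ^ 2 + q ^ 2 + p * q * y ^ m := by
  have h : y ^ (-m) * y ^ m = 1 := by rw [← zpow_add₀ hy, neg_add_cancel, zpow_zero]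
  linear_combination q ^ 2 * h

theorem kendall_pgf_biased_odd_general (ν : ℕ) (p q : ℝ)
    (hpq : p + q = 1) (y : ℝ) (hy : y ≠ 0) :
    ∑ x : Fin (2 * ν + 1) → Fin 2,
        (∏ k, if x k = 0 then p else q) * y ^ kendallS x
      = ∏ k ∈ Finset.Icc 1 ν,
          (p * q * y ^ (-(2 * (k : ℤ))) + p ^ 2 + q ^ 2 + p * q * y ^ (2 * (k : ℤ))) := by
  set f : ℤ → ℝ := fun j => p + q * y ^ (2 * j)
  calc _ = ∏ i : Fin (2 * ν + 1), f (ν - i) := by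
        rw [sum_prod_mul_zpow_kendallS p q hy]
        refine prod_congr rfl fun i _ => ?_
        simp only [f]
        congr 3
        push_cast
        ring
    _ = f 0 * ∏ k ∈ Icc 1 ν, f (-k) * f k := by
        rw [Fin.prod_univ_eq_prod_range (fun i => f (ν - i)), prod_range_sub_eq_mul_prod_Icc]
    _ = _ := by
        simp only [f, mul_zero, zpow_zero, mul_one, hpq, one_mul, mul_neg]
        exact prod_congr rfl fun k _ => mul_add_zpow_neg_mul_add_zpow p q hy _

/-- Biased binary case, n = 2ν+1 odd: the PGF of S is ∏ₖ (pq x^{-2k} + p² + q² + pq x^{2k}). -/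
theorem kendall_pgf_biased_odd (ν : ℕ) (p q : ℝ) (hp : 0 ≤ p) (hq : 0 ≤ q)
    (hpq : p + q = 1) (y : ℝ) (hy : y ≠ 0) :
    ∑ x : Fin (2 * ν + 1) → Fin 2,
        (∏ k, if x k = 0 then p else q) * y ^ kendallS x
      = ∏ k ∈ Finset.Icc 1 ν,
          (p * q * y ^ (-(2 * (k : ℤ))) + p ^ 2 + q ^ 2 + p * q * y ^ (2 * (k : ℤ))) :=
  kendall_pgf_biased_odd_general ν p q hpq y hy
end
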